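/- arXiv:2107.10781 — 7 statements merged into one kernel-verified Lean document; each statement's English description precedes it below -/
import Mathlib

section
/- Let G be a finite simple graph on a vertex type V with n = |V|, and let A be its adjacency matrix over ℤ. For every natural number d with 0 ≤ d ≤ n, the coefficient of λ^{n-d} in the characteristic polynomial det(λI − A) of A equals the sum, over all elementary edge-subsets E' of G covering exactly d vertices, of (−1)^{c(E')} · 2^{z(E')}, where c(E') is the number of connected components of the graph spanned by E' that contain an edge, and z(E') is the number of such components in which every covered vertex has degree 2 (i.e., the number of cycle components). -/
open scoped Classical

/-- The simple graph spanned by a finite set of edges. -/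
noncomputable def spanGraph {V : Type*} (E' : Finset (Sym2 V)) : SimpleGraph V :=
  SimpleGraph.fromEdgeSet (E' : Set (Sym2 V))

/-- A finite set of edges is *elementary* if in the graph it spans, every covered vertex
has degree 1 or 2, and every vertex of degree 1 has its (unique) neighbor also of
degree 1; equivalently, every component of the spanned graph containing an edge is a
single edge or a cycle. -/
noncomputable def IsElementary {V : Type*} [Fintype V] (E' : Finset (Sym2 V)) : Prop :=
  (∀ v ∈ (spanGraph E').support,
      (spanGraph E').degree v = 1 ∨ (spanGraph E').degree v = 2) ∧
  ∀ v w : V, (spanGraph E').degree v = 1 → (spanGraph E').Adj v w →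
      (spanGraph E').degree w = 1

/-- The number of connected components of the graph spanned by `E'` that contain an
edge. -/
noncomputable def numEdgeComponents {V : Type*} [Fintype V] (E' : Finset (Sym2 V)) : ℕ :=
  Nat.card {C : (spanGraph E').ConnectedComponent //
    ∃ v w, (spanGraph E').Adj v w ∧ (spanGraph E').connectedComponentMk v = C}

/-- The number of connected components of the graph spanned by `E'` that contain an
edge and in which every vertex has degree 2, i.e. the number of cycle components. -/
noncomputable def numCycleComponents {V : Type*} [Fintype V] (E' : Finset (Sym2 V)) : ℕ :=
  Nat.card {C : (spanGraph E').ConnectedComponent //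
    (∃ v w, (spanGraph E').Adj v w ∧ (spanGraph E').connectedComponentMk v = C) ∧
    ∀ v, (spanGraph E').connectedComponentMk v = C → (spanGraph E').degree v = 2}

/-!
Expanding `det (λI - A)` by the Leibniz formula, the coefficient of `λ^(n-d)` is `(-1)^d` times
the sum of `sign σ` over the permutations `σ` that move exactly `d` vertices, each to a neighbour.
The graph of such a `σ`, with edges `{x, σ x}`, is an elementary subgraph covering the moved
vertices, and its components containing an edge are the cycles of `σ`; hence
`sign σ = (-1)^(d + c)`. Conversely, every elementary graph `H` is the graph of a permutation
(orient each cycle component, swap each edge component), and a permutation with graph `H` is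
determined on a component by its value at a single vertex, so the permutations with graph `H` are
obtained from one of them by reversing it on an arbitrary set of cycle components: there are `2^z`.
-/

open Finset

theorem SimpleGraph.Reachable.propagate {V : Type*} {H : SimpleGraph V} {P : V → Prop}
    (hP : ∀ ⦃a b⦄, H.Adj a b → P a → P b) {x y : V} (h : H.Reachable x y) (hx : P x) : P y := by
  obtain ⟨p⟩ := h
  induction p with
  | nil => exact hx
  | cons hab _ ih => exact ih (hP hab hx)

theorem SimpleGraph.neighborFinset_eq_of_le {V : Type*} [Fintype V] {G H : SimpleGraph V}
    (h : G ≤ H) {a : V} (hdeg : H.degree a ≤ G.degree a) :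
    G.neighborFinset a = H.neighborFinset a :=
  eq_of_subset_of_card_le (fun _ hb => (H.mem_neighborFinset _ _).2
    (h ((G.mem_neighborFinset _ _).1 hb))) hdeg

theorem Nat.card_eq_of_surjective_of_eq_iff {α β γ : Type*} {f : α → β} {g : α → γ}
    (hf : Function.Surjective f) (hg : Function.Surjective g)
    (h : ∀ a b, f a = f b ↔ g a = g b) : Nat.card β = Nat.card γ :=
  Nat.card_congr <| (Setoid.quotientKerEquivOfSurjective f hf).symm.trans <|
    (Quotient.congrRight h).trans (Setoid.quotientKerEquivOfSurjective g hg)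

theorem Finset.eq_of_pair_eq_pair {α : Type*} [DecidableEq α] {a b c : α}
    (h : ({a, c} : Finset α) = {b, c}) : a = b := by
  have ha : a ∈ ({b, c} : Finset α) := h ▸ mem_insert_self a {c}
  have hb : b ∈ ({a, c} : Finset α) := h.symm ▸ mem_insert_self b {c}
  simp only [mem_insert, mem_singleton] at ha hb
  rcases ha with ha | rfl
  · exact ha
  · rcases hb with hb | rfl
    exacts [hb.symm, rfl]

namespace Equiv.Perm

variable {V ι : Type*}

def glue (f : V → ι) (ρ : ι → Perm V) (hρ : ∀ i x, f (ρ i x) = f x) : Perm V where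
  toFun x := ρ (f x) x
  invFun x := (ρ (f x))⁻¹ x
  left_inv x := by simp [hρ]
  right_inv x := by
    have : f ((ρ (f x))⁻¹ x) = f x := by simpa using (hρ (f x) ((ρ (f x))⁻¹ x)).symm
    simp only [this]
    exact (ρ (f x)).apply_symm_apply x

@[simp]
theorem glue_apply (f : V → ι) (ρ : ι → Perm V) (hρ : ∀ i x, f (ρ i x) = f x) (x : V) :
    glue f ρ hρ x = ρ (f x) x :=
  rfl

end Equiv.Perm

open Equiv in
theorem SimpleGraph.Walk.IsCycle.exists_perm {V : Type*} [DecidableEq V] {H : SimpleGraph V}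
    {u : V} {p : H.Walk u u} (hp : p.IsCycle) :
    ∃ ρ : Perm V, (∀ x ∉ p.support, ρ x = x) ∧ ∀ x ∈ p.support, H.Adj x (ρ x) ∧ ρ (ρ x) ≠ x := by
  set l := p.support.tail
  have hl : l.Nodup := hp.support_nodup
  have hlen : l.length = p.length := by simp [l]
  have h3 := hp.three_le_length
  have hmem : ∀ x, x ∈ p.support ↔ x ∈ l := fun x => by
    rw [← p.cons_tail_support, List.mem_cons, or_iff_right_iff_imp]
    rintro rfl
    exact p.end_mem_tail_support hp.not_nil
  have hget : ∀ i (hi : i < l.length), l[i] = p.getVert (i + 1) := fun i hi => by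
    simp [l, List.getElem_tail, Walk.support_getElem_eq_getVert]
  refine ⟨l.formPerm, fun x hx => List.formPerm_apply_of_notMem (by rwa [← hmem]),
    fun x hx => ?_⟩
  obtain ⟨i, hi, rfl⟩ := List.getElem_of_mem ((hmem x).1 hx)
  constructor
  · rw [List.formPerm_apply_getElem _ hl, hget, hget]
    rcases Nat.lt_or_ge (i + 1) l.length with h | h
    · rw [Nat.mod_eq_of_lt h]
      exact p.adj_getVert_succ (by omega)
    · have hi' : i + 1 = p.length := by omega
      rw [hi', ← hlen, Nat.mod_self, hlen, p.getVert_length]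
      simpa using p.adj_getVert_succ (i := 0) (by omega)
  · rw [← Perm.mul_apply, ← sq, List.formPerm_pow_apply_getElem _ hl, Ne, hl.getElem_inj_iff]
    rcases Nat.lt_or_ge (i + 2) l.length with h | h
    · rw [Nat.mod_eq_of_lt h]; omega
    · rw [Nat.mod_eq_sub_mod h, Nat.mod_eq_of_lt (by omega)]; omega

def permGraph {V : Type*} (σ : Equiv.Perm V) : SimpleGraph V :=
  SimpleGraph.fromRel fun x y => σ x = y

section PermGraph

open Equiv

variable {V ι : Type*} {σ τ : Perm V} {x y : V}

theorem permGraph_adj : (permGraph σ).Adj x y ↔ x ≠ y ∧ (σ x = y ∨ σ y = x) :=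
  SimpleGraph.fromRel_adj _ _ _

@[simp]
theorem permGraph_inv (σ : Perm V) : permGraph σ⁻¹ = permGraph σ := by
  ext x y
  simp only [permGraph_adj, Perm.inv_eq_iff_eq]
  tauto

theorem permGraph_adj_apply (h : σ x ≠ x) : (permGraph σ).Adj x (σ x) :=
  permGraph_adj.2 ⟨h.symm, Or.inl rfl⟩

theorem permGraph_le_iff {G : SimpleGraph V} :
    permGraph σ ≤ G ↔ ∀ x, σ x ≠ x → G.Adj x (σ x) := by
  refine ⟨fun h x hx => h (permGraph_adj_apply hx), fun h x y hxy => ?_⟩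
  obtain ⟨hne, rfl | rfl⟩ := permGraph_adj.1 hxy
  · exact h x hne.symm
  · exact (h y hne).symm

theorem permGraph_glue_adj (f : V → ι) (ρ : ι → Perm V) (hρ : ∀ i x, f (ρ i x) = f x) :
    (permGraph (Perm.glue f ρ hρ)).Adj x y ↔ f x = f y ∧ (permGraph (ρ (f x))).Adj x y := by
  simp only [permGraph_adj, Perm.glue_apply]
  constructor
  · rintro ⟨hne, rfl | rfl⟩
    · exact ⟨(hρ _ _).symm, hne, Or.inl rfl⟩
    · exact ⟨hρ _ _, hne, Or.inr (by rw [hρ])⟩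
  · rintro ⟨hf, hne, h | h⟩
    · exact ⟨hne, Or.inl h⟩
    · exact ⟨hne, Or.inr (by rwa [← hf])⟩

theorem mem_support_permGraph : x ∈ (permGraph σ).support ↔ σ x ≠ x := by
  refine ⟨fun ⟨y, hxy⟩ hx => ?_, fun h => ⟨_, permGraph_adj_apply h⟩⟩
  obtain ⟨hne, h | h⟩ := permGraph_adj.1 hxy
  · exact hne (hx ▸ h)
  · exact hne (σ.injective (h.trans hx.symm)).symm

theorem reachable_permGraph_apply (σ : Perm V) (x : V) : (permGraph σ).Reachable x (σ x) := by
  by_cases h : σ x = x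
  · rw [h]
  · exact (permGraph_adj_apply h).reachable

theorem connectedComponentMk_apply_of_permGraph_le {H : SimpleGraph V} (h : permGraph σ ≤ H)
    (x : V) : H.connectedComponentMk (σ x) = H.connectedComponentMk x :=
  (SimpleGraph.ConnectedComponent.sound ((reachable_permGraph_apply σ x).mono h)).symm

theorem reachable_permGraph_iff [Finite V] :
    (permGraph σ).Reachable x y ↔ σ.SameCycle x y := by
  constructor
  · refine fun h => h.propagate (P := σ.SameCycle x) (fun a b hab hxa => ?_) (.refl _ _)
    obtain ⟨-, rfl | rfl⟩ := permGraph_adj.1 hab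
    · exact Perm.sameCycle_apply_right.2 hxa
    · exact Perm.sameCycle_apply_right.1 hxa
  · intro h
    obtain ⟨n, rfl⟩ := h.exists_nat_pow_eq
    clear h
    induction n with
    | zero => rfl
    | succ n ih =>
      exact ih.trans (by simpa [pow_succ'] using reachable_permGraph_apply σ ((σ ^ n) x))

theorem apply_eq_or_eq_inv_apply_of_permGraph_eq (h : permGraph τ = permGraph σ) (x : V) :
    τ x = σ x ∨ τ x = σ⁻¹ x := by
  by_cases hx : τ x = x
  · refine Or.inl (hx.trans ?_)
    by_contra hσx
    exact mem_support_permGraph.1 (h ▸ mem_support_permGraph.2 (Ne.symm hσx)) hx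
  · obtain ⟨-, h1 | h1⟩ := permGraph_adj.1 (h ▸ permGraph_adj_apply hx)
    · exact Or.inl h1.symm
    · exact Or.inr (Perm.eq_inv_iff_eq.2 h1)

variable [Fintype V] [DecidableEq V]

theorem neighborFinset_permGraph (h : σ x ≠ x) :
    (permGraph σ).neighborFinset x = {σ x, σ⁻¹ x} := by
  ext y
  rw [SimpleGraph.mem_neighborFinset, permGraph_adj, mem_insert, mem_singleton,
    Perm.eq_inv_iff_eq]
  constructor
  · rintro ⟨-, h | h⟩
    exacts [Or.inl h.symm, Or.inr h]
  · rintro (rfl | h')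
    · exact ⟨h.symm, Or.inl rfl⟩
    · exact ⟨by rintro rfl; exact h h', Or.inr h'⟩

theorem degree_permGraph (h : σ x ≠ x) :
    (permGraph σ).degree x = if σ (σ x) = x then 1 else 2 := by
  rw [← SimpleGraph.card_neighborFinset_eq_degree, neighborFinset_permGraph h]
  split_ifs with h2
  · rw [← Perm.eq_inv_iff_eq.2 h2, pair_eq_singleton, card_singleton]
  · refine card_pair fun he => h2 ?_
    rw [he]
    exact σ.apply_symm_apply x

theorem one_le_degree_permGraph (h : σ x ≠ x) : 1 ≤ (permGraph σ).degree x := by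
  rw [degree_permGraph h]
  split_ifs <;> omega

theorem degree_permGraph_eq_two_iff : (permGraph σ).degree x = 2 ↔ σ x ≠ σ⁻¹ x := by
  by_cases hx : σ x = x
  · have hinv : σ⁻¹ x = x := Perm.inv_eq_iff_eq.2 hx.symm
    rw [(SimpleGraph.degree_eq_zero_iff_notMem_support _ _).2
      (mt mem_support_permGraph.1 (not_not.2 hx)), hx, hinv]
    simp
  · rw [degree_permGraph hx, Ne, Perm.eq_inv_iff_eq]
    split_ifs <;> simp_all

theorem apply_eq_of_adj_of_permGraph_eq (h : permGraph τ = permGraph σ)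
    (hxy : (permGraph σ).Adj x y) (hx : σ x = τ x) : σ y = τ y := by
  have hN : ∀ z, σ z ≠ z → ({σ z, σ⁻¹ z} : Finset V) = {τ z, τ⁻¹ z} := fun z hz => by
    rw [← neighborFinset_permGraph hz, ← neighborFinset_permGraph (σ := τ) ?_, h]
    exact mem_support_permGraph.1 (h ▸ mem_support_permGraph.2 hz)
  obtain ⟨-, hxy' | hyx⟩ := permGraph_adj.1 hxy
  · have hNy := hN y (mem_support_permGraph.1 ⟨x, hxy.symm⟩)
    rw [Perm.inv_eq_iff_eq.2 hxy'.symm, Perm.inv_eq_iff_eq.2 (hx.symm.trans hxy').symm] at hNy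
    exact eq_of_pair_eq_pair hNy
  · have hNx := hN x (mem_support_permGraph.1 ⟨y, hxy⟩)
    rw [Perm.inv_eq_iff_eq.2 hyx.symm, hx, pair_comm, pair_comm (τ x)] at hNx
    rw [hyx]
    exact (Perm.eq_inv_iff_eq.1 (eq_of_pair_eq_pair hNx)).symm

theorem card_edgeComponents_permGraph (σ : Perm V) :
    Nat.card {C : (permGraph σ).ConnectedComponent //
      ∃ v w, (permGraph σ).Adj v w ∧ (permGraph σ).connectedComponentMk v = C} =
      #σ.cycleFactorsFinset := by
  rw [← Nat.card_eq_finsetCard]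
  refine Nat.card_eq_of_surjective_of_eq_iff
    (f := fun v : σ.support => ⟨(permGraph σ).connectedComponentMk v, v, σ v,
      permGraph_adj_apply (Perm.mem_support.1 v.2), rfl⟩)
    (g := fun v => ⟨σ.cycleOf v, Perm.cycleOf_mem_cycleFactorsFinset_iff.2 v.2⟩) ?_ ?_ ?_
  · rintro ⟨C, v, w, hvw, rfl⟩
    exact ⟨⟨v, Perm.mem_support.2 (mem_support_permGraph.1 ⟨w, hvw⟩)⟩, rfl⟩
  · rintro ⟨c, hc⟩
    obtain ⟨v, hv, -⟩ := (Perm.mem_cycleFactorsFinset_iff.1 hc).1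
    have hvc : v ∈ c.support := Perm.mem_support.2 hv
    exact ⟨⟨v, Perm.mem_cycleFactorsFinset_support_le hc hvc⟩,
      Subtype.ext (Perm.cycle_is_cycleOf hvc hc).symm⟩
  · rintro ⟨v, hv⟩ ⟨w, hw⟩
    simp only [Subtype.mk.injEq, SimpleGraph.ConnectedComponent.eq, reachable_permGraph_iff,
      Perm.sameCycle_iff_cycleOf_eq_of_mem_support hv hw]

theorem sign_eq_neg_one_pow (σ : Perm V) :
    (Perm.sign σ : ℤ) = (-1) ^ (#σ.support + #σ.cycleFactorsFinset) := by
  rw [Perm.sign_of_cycleType, Perm.sum_cycleType, Perm.cycleType_def, Multiset.card_map]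
  push_cast
  rfl

end PermGraph

namespace SimpleGraph

variable {V : Type*} [Fintype V] (H : SimpleGraph V)

def IsElementary : Prop :=
  (∀ v ∈ H.support, H.degree v = 1 ∨ H.degree v = 2) ∧
    ∀ v w : V, H.degree v = 1 → H.Adj v w → H.degree w = 1

abbrev CycleComponent : Type _ :=
  {C : H.ConnectedComponent // (∃ v w, H.Adj v w ∧ H.connectedComponentMk v = C) ∧
    ∀ v, H.connectedComponentMk v = C → H.degree v = 2}

namespace IsElementary

open Equiv

variable {H} (hH : H.IsElementary) {x y : V}
include hH

theorem degree_le_two (x : V) : H.degree x ≤ 2 := by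
  by_cases hx : x ∈ H.support
  · rcases hH.1 x hx with h | h <;> omega
  · rw [(degree_eq_zero_iff_notMem_support _ _).2 hx]
    omega

theorem degree_eq_of_adj (h : H.Adj x y) : H.degree x = H.degree y := by
  have h1 := fun hx => hH.2 x y hx h
  have h2 := fun hy => hH.2 y x hy h.symm
  rcases hH.1 x ⟨y, h⟩ with hx | hx <;> rcases hH.1 y ⟨x, h.symm⟩ with hy | hy <;> omega

theorem degree_eq_of_reachable (h : H.Reachable x y) : H.degree x = H.degree y :=
  h.propagate (P := fun z => H.degree x = H.degree z)
    (fun _ _ hab ha => ha.trans (hH.degree_eq_of_adj hab)) rfl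

theorem exists_isCycle_of_degree_eq_two (hx : H.degree x = 2) :
    ∃ (u : V) (p : H.Walk u u), p.IsCycle ∧ x ∈ p.support := by
  -- `K` is the union of the cycle components of `H`, hence satisfies `IsCycles`
  let K : SimpleGraph V :=
    { Adj a b := H.Adj a b ∧ H.degree a = 2
      symm := ⟨fun _ _ ⟨h, ha⟩ => ⟨h.symm, hH.degree_eq_of_adj h ▸ ha⟩⟩
      loopless := ⟨fun a h => H.loopless.irrefl a h.1⟩ }
  have hKH : K ≤ H := fun _ _ h => h.1
  have hK : K.IsCycles := by
    rintro a ⟨_, hab⟩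
    have hN : K.neighborSet a = H.neighborSet a := by
      ext
      exact and_iff_left hab.2
    rw [hN, Set.ncard_eq_toFinset_card']
    exact hab.2
  obtain ⟨y, hxy⟩ := (degree_pos_iff_exists_adj _ _).1 (hx ▸ two_pos : 0 < H.degree x)
  have hKxy : K.Adj x y := ⟨hxy, hx⟩
  obtain ⟨u, p, hp, he⟩ := adj_and_reachable_delete_edges_iff_exists_cycle.1
    ⟨hKxy, hK.reachable_deleteEdges hKxy⟩
  exact ⟨u, p.mapLe hKH, hp.mapLe hKH, by
    rw [Walk.support_mapLe_eq_support]
    exact p.fst_mem_support_of_mem_edges he⟩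

variable [DecidableEq V]

theorem exists_perm_of_mem_support (hx : x ∈ H.support) :
    ∃ ρ : Perm V, permGraph ρ ≤ H ∧ ρ x ≠ x ∧
      ∀ a, ρ a ≠ a → H.degree a ≤ (permGraph ρ).degree a := by
  rcases hH.1 x hx with h1 | h2
  · obtain ⟨y, hy⟩ := card_eq_one.1 h1
    have hxy : H.Adj x y := by
      rw [← mem_neighborFinset, hy]
      exact mem_singleton_self y
    have hmoved : ∀ a, swap x y a ≠ a → a = x ∨ a = y := fun a ha => by
      by_contra! h
      exact ha (swap_apply_of_ne_of_ne h.1 h.2)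
    refine ⟨swap x y, permGraph_le_iff.2 fun a ha => ?_, by simpa using hxy.ne.symm,
      fun a ha => ?_⟩
    · rcases hmoved a ha with rfl | rfl
      · simpa using hxy
      · simpa using hxy.symm
    · have : H.degree a = 1 := by
        rcases hmoved a ha with rfl | rfl
        exacts [h1, hH.2 _ _ h1 hxy]
      exact this ▸ one_le_degree_permGraph ha
  · obtain ⟨u, p, hp, hxp⟩ := hH.exists_isCycle_of_degree_eq_two h2
    obtain ⟨ρ, hfix, hmove⟩ := hp.exists_perm
    have hsupp : ∀ a, ρ a ≠ a → a ∈ p.support := fun a ha => by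
      by_contra h
      exact ha (hfix a h)
    refine ⟨ρ, permGraph_le_iff.2 fun a ha => (hmove a (hsupp a ha)).1,
      fun h => (hmove x hxp).2 (by rw [h, h]), fun a ha => ?_⟩
    rw [degree_permGraph ha, if_neg (hmove a (hsupp a ha)).2]
    exact hH.degree_le_two a

theorem exists_perm_on_component (C : H.ConnectedComponent) :
    ∃ ρ : Perm V, permGraph ρ ≤ H ∧
      ∀ x, H.connectedComponentMk x = C → H.degree x ≤ (permGraph ρ).degree x := by
  by_cases hC : ∃ v ∈ H.support, H.connectedComponentMk v = C
  · obtain ⟨v, hv, rfl⟩ := hC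
    obtain ⟨ρ, hle, hρv, hdeg⟩ := hH.exists_perm_of_mem_support hv
    refine ⟨ρ, hle, fun x hx => hdeg x ?_⟩
    -- at a vertex moved by `ρ` the degree bound makes `H` and `permGraph ρ` share all
    -- neighbours, so the moved vertices form a union of components of `H`
    refine (ConnectedComponent.exact hx.symm).propagate (P := fun a => ρ a ≠ a)
      (fun a b hab ha => ?_) hρv
    have hab' : (permGraph ρ).Adj a b := by
      rw [← mem_neighborFinset, neighborFinset_eq_of_le hle (hdeg a ha), mem_neighborFinset]
      exact hab
    exact mem_support_permGraph.1 ⟨a, hab'.symm⟩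
  · push Not at hC
    refine ⟨1, permGraph_le_iff.2 fun a ha => absurd rfl ha, fun x hx => ?_⟩
    rw [(degree_eq_zero_iff_notMem_support _ _).2 fun h => hC x h hx]
    exact Nat.zero_le _

theorem exists_permGraph_eq : ∃ σ : Perm V, permGraph σ = H := by
  choose ρ hle hdeg using hH.exists_perm_on_component
  refine ⟨Perm.glue H.connectedComponentMk ρ
    fun C => connectedComponentMk_apply_of_permGraph_le (hle C), ?_⟩
  ext x y
  rw [permGraph_glue_adj]
  refine ⟨fun h => hle _ h.2, fun h => ⟨ConnectedComponent.sound h.reachable, ?_⟩⟩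
  rw [← mem_neighborFinset, neighborFinset_eq_of_le (hle _) (hdeg _ x rfl), mem_neighborFinset]
  exact h

end IsElementary

end SimpleGraph

open Equiv SimpleGraph in
theorem isElementary_permGraph {V : Type*} [Fintype V] [DecidableEq V] (σ : Perm V) :
    (permGraph σ).IsElementary := by
  refine ⟨fun v hv => ?_, fun v w hv hvw => ?_⟩
  · rw [degree_permGraph (mem_support_permGraph.1 hv)]
    split_ifs <;> simp
  · have hσv := mem_support_permGraph.1 ⟨w, hvw⟩
    rw [degree_permGraph hσv] at hv
    have hvv : σ (σ v) = v := by
      by_contra h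
      rw [if_neg h] at hv
      omega
    have hw : w = σ v := by
      obtain ⟨-, h | h⟩ := permGraph_adj.1 hvw
      · exact h.symm
      · exact σ.injective (h.trans hvv.symm)
    subst hw
    rw [degree_permGraph (by rwa [hvv, ne_comm]), if_pos (by rw [hvv])]

namespace Equiv.Perm

variable {V : Type*} (σ : Perm V) (P : Set (permGraph σ).ConnectedComponent)

noncomputable def reverseOn : Perm V :=
  glue (permGraph σ).connectedComponentMk (fun C => if C ∈ P then σ⁻¹ else σ) fun C x => by
    split_ifs
    · exact connectedComponentMk_apply_of_permGraph_le (permGraph_inv σ).le x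
    · exact connectedComponentMk_apply_of_permGraph_le le_rfl x

theorem reverseOn_apply (x : V) : σ.reverseOn P x =
    if (permGraph σ).connectedComponentMk x ∈ P then σ⁻¹ x else σ x := by
  rw [reverseOn, glue_apply]
  split_ifs <;> rfl

@[simp]
theorem permGraph_reverseOn : permGraph (σ.reverseOn P) = permGraph σ := by
  ext x y
  rw [reverseOn, permGraph_glue_adj]
  refine ⟨fun ⟨_, h⟩ => ?_, fun h => ⟨SimpleGraph.ConnectedComponent.sound h.reachable, ?_⟩⟩ <;>
    split_ifs at * <;> simpa using h

end Equiv.Perm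

section Count

open Equiv SimpleGraph

variable {V : Type*} [Fintype V] [DecidableEq V] {σ τ : Perm V}

theorem eq_reverseOn_of_permGraph_eq (hτ : permGraph τ = permGraph σ) :
    τ = σ.reverseOn {C | ∃ x, (permGraph σ).connectedComponentMk x = C ∧ τ x ≠ σ x} := by
  ext x
  rw [Perm.reverseOn_apply]
  split_ifs with hx
  · obtain ⟨y, hy, hτy⟩ := hx
    have hinv : permGraph τ = permGraph σ⁻¹ := by rw [hτ, permGraph_inv]
    refine ((ConnectedComponent.exact hy).propagate (P := fun z => σ⁻¹ z = τ z)
      (fun a b hab ha => apply_eq_of_adj_of_permGraph_eq hinv (by rwa [permGraph_inv]) ha)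
      ?_).symm
    exact ((apply_eq_or_eq_inv_apply_of_permGraph_eq hτ y).resolve_left hτy).symm
  · by_contra h
    exact hx ⟨x, rfl, h⟩

theorem exists_cycleComponent_of_apply_ne (hτ : permGraph τ = permGraph σ) {x : V}
    (hx : τ x ≠ σ x) :
    ∃ C : (permGraph σ).CycleComponent, C.1 = (permGraph σ).connectedComponentMk x := by
  have h2 : σ x ≠ σ⁻¹ x := by
    rwa [← (apply_eq_or_eq_inv_apply_of_permGraph_eq hτ x).resolve_left hx, ne_comm]
  have hσx : σ x ≠ x := fun h => h2 (by rw [h, eq_comm, Perm.inv_eq_iff_eq, h])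
  refine ⟨⟨_, ⟨x, σ x, permGraph_adj_apply hσx, rfl⟩, fun v hv => ?_⟩, rfl⟩
  rw [(isElementary_permGraph σ).degree_eq_of_reachable (ConnectedComponent.exact hv)]
  exact degree_permGraph_eq_two_iff.2 h2

theorem card_permGraph_eq_permGraph (σ : Perm V) :
    Nat.card {τ : Perm V // permGraph τ = permGraph σ} =
      2 ^ Nat.card (permGraph σ).CycleComponent := by
  rw [Nat.card_eq_fintype_card (α := (permGraph σ).CycleComponent), ← Fintype.card_set,
    ← Nat.card_eq_fintype_card]
  symm
  refine Nat.card_eq_of_bijective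
    (fun S => ⟨σ.reverseOn (Subtype.val '' S), σ.permGraph_reverseOn _⟩) ⟨?_, ?_⟩
  · intro S S' hSS'
    ext C
    obtain ⟨⟨v, w, hvw, hv⟩, hdeg⟩ := C.2
    have h2 := degree_permGraph_eq_two_iff.1 (hdeg v hv)
    have := congrArg (fun τ => τ.1 v) hSS'
    simp only [Perm.reverseOn_apply, hv, Subtype.val_injective.mem_set_image] at this
    split_ifs at this <;> simp_all [eq_comm]
  · rintro ⟨τ, hτ⟩
    refine ⟨Subtype.val ⁻¹' {C | ∃ x, (permGraph σ).connectedComponentMk x = C ∧ τ x ≠ σ x},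
      Subtype.ext ?_⟩
    change σ.reverseOn _ = τ
    rw [Set.image_preimage_eq_of_subset, ← eq_reverseOn_of_permGraph_eq hτ]
    rintro _ ⟨x, rfl, hx⟩
    exact exists_cycleComponent_of_apply_ne hτ hx

theorem SimpleGraph.IsElementary.card_permGraph_eq {H : SimpleGraph V} (hH : H.IsElementary) :
    Nat.card {σ : Perm V // permGraph σ = H} = 2 ^ Nat.card H.CycleComponent := by
  obtain ⟨σ, rfl⟩ := hH.exists_permGraph_eq
  exact card_permGraph_eq_permGraph σ

end Count
section Charpoly

open Polynomial Equiv

variable {V : Type*} [Fintype V] [DecidableEq V] (G : SimpleGraph V) [DecidableRel G.Adj]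

theorem charmatrix_adjMatrix_apply (i j : V) :
    (G.adjMatrix ℤ).charmatrix i j = if i = j then X else if G.Adj i j then -1 else 0 := by
  by_cases h : i = j
  · subst h
    simp [Matrix.charmatrix_apply_eq]
  · rw [Matrix.charmatrix_apply_ne _ _ _ h, SimpleGraph.adjMatrix_apply]
    split_ifs <;> simp

theorem prod_charmatrix_adjMatrix (σ : Perm V) :
    ∏ i, (G.adjMatrix ℤ).charmatrix (σ i) i = if permGraph σ ≤ G then
      C ((-1) ^ #σ.support) * X ^ (Fintype.card V - #σ.support) else 0 := by
  have hfix : #{x | σ x = x} = Fintype.card V - #σ.support := by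
    rw [← card_compl]
    congr 1
    ext
    simp [Perm.mem_support]
  have hle : permGraph σ ≤ G ↔ ∀ x ∈ σ.support, G.Adj (σ x) x := by
    simp [permGraph_le_iff, Perm.mem_support, G.adj_comm]
  simp_rw [charmatrix_adjMatrix_apply]
  rw [prod_ite, prod_const, hfix]
  change X ^ _ * ∏ x ∈ σ.support, _ = _
  rw [prod_ite_zero, prod_const]
  simp only [← hle]
  split_ifs <;> simp [mul_comm]

theorem coeff_charpoly_adjMatrix {d : ℕ} (hd : d ≤ Fintype.card V) :
    (G.adjMatrix ℤ).charpoly.coeff (Fintype.card V - d) =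
      ∑ σ : Perm V with #σ.support = d ∧ permGraph σ ≤ G, (-1) ^ d * (Perm.sign σ : ℤ) := by
  rw [Matrix.charpoly, Matrix.det_apply, finsetSum_coeff, sum_filter]
  refine sum_congr rfl fun σ _ => ?_
  have hσ : #σ.support ≤ Fintype.card V := card_le_univ _
  rw [coeff_smul, prod_charmatrix_adjMatrix]
  by_cases hG : permGraph σ ≤ G
  · by_cases hdσ : #σ.support = d
    · subst hdσ
      rw [if_pos hG, coeff_C_mul_X_pow, if_pos rfl]
      simp [hG, Units.smul_def, mul_comm]
    · have : Fintype.card V - d ≠ Fintype.card V - #σ.support := by omega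
      rw [if_pos hG, coeff_C_mul_X_pow, if_neg this]
      simp [hdσ]
  · simp [hG]

end Charpoly

section EdgeSets

open Equiv SimpleGraph

variable {V : Type*} {E' : Finset (Sym2 V)} {σ : Perm V}

theorem isElementary_iff_spanGraph [Fintype V] : IsElementary E' ↔ (spanGraph E').IsElementary :=
  Iff.rfl

theorem spanGraph_edgeFinset (H : SimpleGraph V) [Fintype H.edgeSet] :
    spanGraph H.edgeFinset = H := by
  rw [spanGraph, coe_edgeFinset, fromEdgeSet_edgeSet]

theorem disjoint_diagSet_of_subset_edgeFinset {G : SimpleGraph V} [Fintype G.edgeSet]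
    (h : E' ⊆ G.edgeFinset) : Disjoint (E' : Set (Sym2 V)) Sym2.diagSet :=
  Set.subset_compl_iff_disjoint_right.1 <|
    (coe_subset.2 h).trans (G.coe_edgeFinset ▸ G.edgeSet_subset_compl_diagSet)

theorem numEdgeComponents_eq_of_permGraph_eq [Fintype V] [DecidableEq V]
    (h : permGraph σ = spanGraph E') : numEdgeComponents E' = #σ.cycleFactorsFinset := by
  rw [numEdgeComponents, ← h, card_edgeComponents_permGraph]

variable (hE : Disjoint (E' : Set (Sym2 V)) Sym2.diagSet)
include hE

theorem mem_support_spanGraph {v : V} : v ∈ (spanGraph E').support ↔ ∃ e ∈ E', v ∈ e := by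
  constructor
  · rintro ⟨w, hvw⟩
    exact ⟨s(v, w), ((fromEdgeSet_adj _).1 hvw).1, Sym2.mem_mk_left v w⟩
  · rintro ⟨e, he, hv⟩
    obtain ⟨w, rfl⟩ := Sym2.mem_iff_exists.1 hv
    refine ⟨w, (fromEdgeSet_adj _).2 ⟨he, fun hvw => hE.notMem_of_mem_left he ?_⟩⟩
    simp [hvw]

theorem edgeFinset_permGraph_eq_iff [Fintype (permGraph σ).edgeSet] :
    (permGraph σ).edgeFinset = E' ↔ permGraph σ = spanGraph E' := by
  rw [← coe_inj, coe_edgeFinset, edgeSet_eq_iff, spanGraph, and_iff_left hE]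

variable [Fintype V] [DecidableEq V]

theorem card_support_eq_of_permGraph_eq (h : permGraph σ = spanGraph E') :
    #σ.support = Nat.card {v : V // ∃ e ∈ E', v ∈ e} := by
  rw [← Nat.card_eq_finsetCard]
  refine Nat.card_congr (Equiv.subtypeEquivRight fun v => ?_)
  rw [Perm.mem_support, ← mem_support_permGraph, h, mem_support_spanGraph hE]

theorem sum_sign_of_permGraph_eq (hel : IsElementary E') :
    ∑ σ : Perm V with permGraph σ = spanGraph E',
        (-1) ^ Nat.card {v : V // ∃ e ∈ E', v ∈ e} * (Perm.sign σ : ℤ) =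
      (-1) ^ numEdgeComponents E' * 2 ^ numCycleComponents E' := by
  have hterm : ∀ σ ∈ ({σ | permGraph σ = spanGraph E'} : Finset (Perm V)),
      (-1) ^ Nat.card {v : V // ∃ e ∈ E', v ∈ e} * (Perm.sign σ : ℤ) =
        (-1) ^ numEdgeComponents E' := fun σ hσ => by
    have h := (mem_filter.1 hσ).2
    rw [sign_eq_neg_one_pow, card_support_eq_of_permGraph_eq hE h,
      ← numEdgeComponents_eq_of_permGraph_eq h, ← pow_add, ← add_assoc, ← two_mul, pow_add,
      pow_mul, neg_one_sq, one_pow, one_mul]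
  rw [sum_congr rfl hterm, sum_const, nsmul_eq_mul, mul_comm, ← Fintype.card_subtype,
    ← Nat.card_eq_fintype_card, (isElementary_iff_spanGraph.1 hel).card_permGraph_eq]
  push_cast
  rfl

end EdgeSets

theorem edgeFinset_permGraph_mem_iff {V : Type*} [Fintype V] [DecidableEq V]
    (G : SimpleGraph V) [DecidableRel G.Adj] {d : ℕ} {σ : Equiv.Perm V} :
    (permGraph σ).edgeFinset ∈ G.edgeFinset.powerset.filter
        (fun E' => IsElementary E' ∧ Nat.card {v : V // ∃ e ∈ E', v ∈ e} = d) ↔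
      #σ.support = d ∧ permGraph σ ≤ G := by
  have hσ := spanGraph_edgeFinset (permGraph σ)
  have hE := disjoint_diagSet_of_subset_edgeFinset (subset_refl (permGraph σ).edgeFinset)
  rw [mem_filter, mem_powerset, SimpleGraph.edgeFinset_subset_edgeFinset,
    isElementary_iff_spanGraph, hσ, ← card_support_eq_of_permGraph_eq hE hσ.symm]
  simp only [isElementary_permGraph, true_and, and_comm]

/-- The Harary–Sachs theorem: the coefficient of `λ^(n-d)` in the characteristic
polynomial of the adjacency matrix of a finite simple graph `G` is the sum, over all
elementary edge-subsets `E'` of `G` covering exactly `d` vertices, of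
`(-1)^{c(E')} · 2^{z(E')}`. -/
theorem harary_sachs {V : Type*} [Fintype V] [DecidableEq V]
    (G : SimpleGraph V) [DecidableRel G.Adj] (d : ℕ) (hd : d ≤ Fintype.card V) :
    (Matrix.charpoly (G.adjMatrix ℤ)).coeff (Fintype.card V - d) =
      ∑ E' ∈ G.edgeFinset.powerset.filter
          (fun E' => IsElementary E' ∧ Nat.card {v : V // ∃ e ∈ E', v ∈ e} = d),
        (-1 : ℤ) ^ numEdgeComponents E' * 2 ^ numCycleComponents E' := by
  rw [coeff_charpoly_adjMatrix G hd, ← sum_fiberwise_of_maps_to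
    (g := fun σ => (permGraph σ).edgeFinset)
    fun σ hσ => (edgeFinset_permGraph_mem_iff G).2 (mem_filter.1 hσ).2]
  refine sum_congr rfl fun E' hE' => ?_
  obtain ⟨hEG, hel, hcov⟩ := by simpa only [mem_filter, mem_powerset] using hE'
  have hE := disjoint_diagSet_of_subset_edgeFinset hEG
  have hfiber : ({σ | #σ.support = d ∧ permGraph σ ≤ G} : Finset (Equiv.Perm V)).filter
      (fun σ => (permGraph σ).edgeFinset = E') = ({σ | permGraph σ = spanGraph E'} : Finset _) := by
    ext σ
    simp only [mem_filter, mem_univ, true_and]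
    rw [← edgeFinset_permGraph_mem_iff G, ← edgeFinset_permGraph_eq_iff hE]
    exact ⟨And.right, fun h => ⟨h ▸ hE', h⟩⟩
  rw [hfiber, ← hcov, sum_sign_of_permGraph_eq hE hel]
end

section
/- Let G be a finite simple graph on a vertex type V with n = |V| and n ≥ 3, and let A be its adjacency matrix over ℤ. The coefficient of λ^{n-3} in the characteristic polynomial det(λI − A) equals −2 times the number of triangles of G (i.e., −2 times the number of 3-element cliques of G). -/
/-!
By `Matrix.charpoly_coeff_eq_sum_minors`, the coefficient of `λ^(n-3)` in `det(λI - A)` is `-1`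
times the sum of the `3 × 3` principal minors of `A`. A symmetric `3 × 3` matrix with zero
diagonal has determinant `2xyz`, where `x, y, z` are its off-diagonal entries above the
diagonal; for the adjacency matrix restricted to a `3`-set `s` this is `2` if `s` is a triangle
and `0` otherwise.
-/

open Finset Matrix

theorem Matrix.det_fin_three_of_isSymm_of_diag_eq_zero {R : Type*} [CommRing R]
    {M : Matrix (Fin 3) (Fin 3) R} (hM : M.IsSymm) (hdiag : ∀ i, M i i = 0) :
    M.det = 2 * (M 0 1 * M 0 2 * M 1 2) := by
  rw [det_fin_three, hdiag, hdiag, hdiag, hM.apply 0 1, hM.apply 0 2, hM.apply 1 2]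
  ring

theorem SimpleGraph.det_adjMatrix_submatrix_of_card_eq_three {V R : Type*} [DecidableEq V]
    [CommRing R] (G : SimpleGraph V) [DecidableRel G.Adj] {s : Finset V} (hs : #s = 3) :
    ((G.adjMatrix R).submatrix ((↑) : s → V) (↑)).det = if G.IsNClique 3 s then 2 else 0 := by
  let e : Fin 3 ≃ s := (Fintype.equivFinOfCardEq (by simpa using hs)).symm
  set f : Fin 3 → V := (↑) ∘ e with hf
  have hf_inj : Function.Injective f := Subtype.val_injective.comp e.injective
  have hs_eq : s = {f 0, f 1, f 2} := by
    refine (eq_of_subset_of_card_le ?_ ?_).symm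
    · intro x hx
      simp only [mem_insert, mem_singleton] at hx
      rcases hx with rfl | rfl | rfl <;> exact (e _).2
    · rw [hs, card_eq_three.mpr ⟨_, _, _, hf_inj.ne (by decide),
        hf_inj.ne (by decide), hf_inj.ne (by decide), rfl⟩]
  rw [← det_submatrix_equiv_self e, submatrix_submatrix, ← hf,
    det_fin_three_of_isSymm_of_diag_eq_zero (G.isSymm_adjMatrix.submatrix f)
      fun i => by simp [adjMatrix_apply], hs_eq]
  simp only [is3Clique_triple_iff, submatrix_apply, adjMatrix_apply]
  split_ifs <;> simp_all

/-- Codegree-3 case of the Harary–Sachs theorem: the coefficient of `λ^(n-3)` in the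
characteristic polynomial of the adjacency matrix of a finite simple graph `G` equals
`-2` times the number of triangles (3-element cliques) of `G`. -/
theorem charpoly_coeff_sub_three {V : Type*} [Fintype V] [DecidableEq V]
    (G : SimpleGraph V) [DecidableRel G.Adj] (hn : 3 ≤ Fintype.card V) :
    (Matrix.charpoly (G.adjMatrix ℤ)).coeff (Fintype.card V - 3) =
      -2 * ((G.cliqueFinset 3).card : ℤ) := by
  rw [charpoly_coeff_eq_sum_minors _ 3 hn,
    sum_congr rfl fun s hs => G.det_adjMatrix_submatrix_of_card_eq_three (mem_powersetCard.1 hs).2]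
  simp_rw [← SimpleGraph.mem_cliqueFinset_iff]
  rw [sum_ite_mem, inter_eq_right.2 fun s hs =>
    mem_powersetCard_univ.2 (G.mem_cliqueFinset_iff.1 hs).card_eq, sum_const, nsmul_eq_mul]
  ring
end

section
/- For every natural number n and every permutation σ of Fin (n+1), letting M_σ be the permutation matrix of σ over ℚ and J the (n+1)×(n+1) all-ones matrix over ℚ, the following identity of polynomials in ℚ[X] holds: (X − 1) · charpoly(M_σ − J) = (X + n) · charpoly(M_σ). Equivalently, the multiset of eigenvalues of M_σ − J is obtained from that of M_σ by removing one copy of the eigenvalue 1 and adjoining the eigenvalue −n. -/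
/-!
`M_σ` has all column sums `1`, so the characteristic matrices `X • 1 - M_σ` and
`X • 1 - (M_σ - J)` have constant column sums `X - 1` and `X + n`. Adding every row to row `0`
pulls this column sum out of the determinant and leaves a row of ones; subtracting multiples of
that row from the others removes `J`, so both determinants share the same cofactor.
-/

/-- The permutation matrix of `σ`, with `(M_σ)_{ij} = 1` iff `σ j = i`. -/
def permMatrixQ (m : ℕ) (σ : Equiv.Perm (Fin m)) : Matrix (Fin m) (Fin m) ℚ :=
  Matrix.of fun i j => if σ j = i then 1 else 0

/-- The `m × m` all-ones matrix over `ℚ`. -/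
def allOnesQ (m : ℕ) : Matrix (Fin m) (Fin m) ℚ :=
  Matrix.of fun _ _ => 1

open Polynomial

namespace Matrix

variable {n R : Type*} [Fintype n] [DecidableEq n] [CommRing R]

theorem det_eq_mul_det_updateRow_one {A : Matrix n n R} {s : R} (hA : ∀ j, ∑ i, A i j = s)
    (k : n) : A.det = s * (A.updateRow k fun _ => 1).det := by
  have hrows : (∑ i, (1 : R) • A i : n → R) = s • fun _ => 1 := by
    ext j
    rw [Finset.sum_apply]
    simpa using hA j
  have := det_updateRow_sum A k fun _ => 1
  rw [hrows, det_updateRow_smul] at this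
  simpa using this.symm

theorem det_updateRow_one_add_const (A : Matrix n n R) (c : R) (k : n) :
    ((A + of fun _ _ => c).updateRow k fun _ => 1).det = (A.updateRow k fun _ => 1).det := by
  apply det_eq_of_forall_row_eq_smul_add_const (fun i => if i = k then 0 else c) k (by simp)
  intro i j
  rcases eq_or_ne i k with rfl | h <;> simp [updateRow_apply, *]

theorem sum_charmatrix_apply (M : Matrix n n R) (j : n) :
    ∑ i, charmatrix M i j = X - C (∑ i, M i j) := by
  simp [charmatrix_apply, Finset.sum_sub_distrib, diagonal_apply]

theorem charmatrix_sub_const (M : Matrix n n R) (c : R) :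
    charmatrix (M - of fun _ _ => c) = charmatrix M + of fun _ _ => C c := by
  ext i j : 1
  simp only [charmatrix_apply, sub_apply, add_apply, of_apply, map_sub]
  ring

theorem X_sub_C_mul_charpoly_sub_const {M : Matrix n n R} {r : R} (hM : ∀ j, ∑ i, M i j = r)
    (c : R) :
    (X - C r) * (M - of fun _ _ => c).charpoly =
      (X - C (r - Fintype.card n • c)) * M.charpoly := by
  rcases isEmpty_or_nonempty n with _ | ⟨⟨k⟩⟩
  · simp
  have hsum : ∀ j, ∑ i, charmatrix M i j = X - C r := fun j => by
    rw [sum_charmatrix_apply, hM]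
  have hsum_const : ∀ j, ∑ i, (charmatrix M + of fun _ _ => C c : Matrix n n R[X]) i j =
      X - C (r - Fintype.card n • c) := fun j => by
    simp only [add_apply, of_apply, Finset.sum_add_distrib, hsum, Finset.sum_const,
      Finset.card_univ, smul_C, map_sub]
    ring
  rw [charpoly, charpoly, charmatrix_sub_const, det_eq_mul_det_updateRow_one hsum_const k,
    det_eq_mul_det_updateRow_one hsum k, det_updateRow_one_add_const]
  ring

end Matrix

/-- Lemma 3.5 of the paper, in characteristic-polynomial form: the spectrum of
`M_σ − J` is that of `M_σ` with one copy of the eigenvalue `1` removed and the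
eigenvalue `−n` adjoined. -/
theorem charpoly_permMatrix_sub_allOnes (n : ℕ) (σ : Equiv.Perm (Fin (n + 1))) :
    (Polynomial.X - 1) * Matrix.charpoly (permMatrixQ (n + 1) σ - allOnesQ (n + 1)) =
      (Polynomial.X + (n : Polynomial ℚ)) * Matrix.charpoly (permMatrixQ (n + 1) σ) := by
  have hcols : ∀ j, ∑ i, permMatrixQ (n + 1) σ i j = 1 := fun j => by simp [permMatrixQ]
  have hshift : X + (n : ℚ[X]) = X - C (1 - Fintype.card (Fin (n + 1)) • 1) := by
    simp
  rw [hshift, ← C_1]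
  exact Matrix.X_sub_C_mul_charpoly_sub_const hcols 1
end

section
/- Let n be a natural number, σ a permutation of Fin (n+1), M_σ its permutation matrix over ℂ, and J the (n+1)×(n+1) all-ones matrix over ℂ. Let t be the number of orbits of σ acting on Fin (n+1) (equivalently, the number of cycles of σ, counting fixed points as cycles of length 1). Then the eigenspace of the linear endomorphism of ℂ^{n+1} given by M_σ − J for the eigenvalue 1 has dimension at least t − 1. -/
/-!
Vectors that are constant on the orbits of `σ` are fixed by `M_σ`, and they form a space of
dimension `t` (functions on the orbit set, pulled back along the quotient map). Those among them
with coordinate sum `0` are killed by `J`, hence lie in the `1`-eigenspace of `M_σ − J`, and the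
sum condition is a single linear equation, costing at most one dimension.
-/

/-- The permutation matrix of `σ` over `ℂ`, with `(M_σ)_{ij} = 1` iff `σ j = i`. -/
def permMatrixC (m : ℕ) (σ : Equiv.Perm (Fin m)) : Matrix (Fin m) (Fin m) ℂ :=
  Matrix.of fun i j => if σ j = i then 1 else 0

/-- The `m × m` all-ones matrix over `ℂ`. -/
def allOnesC (m : ℕ) : Matrix (Fin m) (Fin m) ℂ :=
  Matrix.of fun _ _ => 1

open Module Matrix

lemma Equiv.Perm.orbitRel_mk_apply {α : Type*} (σ : Equiv.Perm α) (a : α) :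
    (Quotient.mk (MulAction.orbitRel (Subgroup.zpowers σ) α) (σ a)) = Quotient.mk _ a :=
  Quotient.sound ⟨⟨σ, Subgroup.mem_zpowers σ⟩, rfl⟩

lemma LinearMap.finrank_sub_one_le_finrank_ker {K V : Type*} [Field K] [AddCommGroup V]
    [Module K V] [FiniteDimensional K V] (f : V →ₗ[K] K) :
    finrank K V - 1 ≤ finrank K (LinearMap.ker f) := by
  have hrange : finrank K (LinearMap.range f) ≤ 1 := by
    simpa using Submodule.finrank_le (LinearMap.range f)
  have := f.finrank_range_add_finrank_ker
  omega

lemma permMatrixC_eq_permMatrix (m : ℕ) (σ : Equiv.Perm (Fin m)) :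
    permMatrixC m σ = σ⁻¹.permMatrix ℂ := by
  ext i j
  simp [permMatrixC, Equiv.toPEquiv_apply, Equiv.eq_symm_apply, eq_comm]

lemma permMatrixC_mulVec (m : ℕ) (σ : Equiv.Perm (Fin m)) (v : Fin m → ℂ) :
    permMatrixC m σ *ᵥ v = v ∘ ⇑σ⁻¹ := by
  rw [permMatrixC_eq_permMatrix, permMatrix_mulVec]

lemma allOnesC_mulVec (m : ℕ) (v : Fin m → ℂ) : allOnesC m *ᵥ v = fun _ => ∑ j, v j := by
  ext i
  simp [allOnesC, mulVec, dotProduct]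

lemma mem_eigenspace_one_of_comp_eq_of_sum_eq_zero {m : ℕ} {σ : Equiv.Perm (Fin m)}
    {v : Fin m → ℂ} (hσ : v ∘ σ = v) (hv : ∑ j, v j = 0) :
    v ∈ End.eigenspace (mulVecLin (permMatrixC m σ - allOnesC m)) 1 := by
  have hσ' : v ∘ ⇑σ⁻¹ = v := by
    conv_lhs => rw [← hσ]
    rw [Function.comp_assoc, Equiv.Perm.coe_inv, σ.self_comp_symm, Function.comp_id]
  rw [End.mem_eigenspace_iff, one_smul, mulVecLin_apply, sub_mulVec,
    permMatrixC_mulVec, allOnesC_mulVec, hv, hσ']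
  exact sub_zero v

/-- Geometric-multiplicity claim inside Lemma 3.5: if `σ` has `t` orbits (cycles,
counting fixed points) on `Fin (n+1)`, then the eigenspace of `M_σ − J` for the
eigenvalue `1` has dimension at least `t − 1`. -/
theorem one_eigenspace_dim_ge (n : ℕ) (σ : Equiv.Perm (Fin (n + 1))) :
    Nat.card (Quotient (MulAction.orbitRel (Subgroup.zpowers σ) (Fin (n + 1)))) - 1 ≤
      Module.finrank ℂ
        (Module.End.eigenspace
          (Matrix.mulVecLin (permMatrixC (n + 1) σ - allOnesC (n + 1))) 1) := by
  classical
  let Q := Quotient (MulAction.orbitRel (Subgroup.zpowers σ) (Fin (n + 1)))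
  let lift : (Q → ℂ) →ₗ[ℂ] (Fin (n + 1) → ℂ) := LinearMap.funLeft ℂ ℂ (Quotient.mk _)
  let sum : (Fin (n + 1) → ℂ) →ₗ[ℂ] ℂ := ∑ i, LinearMap.proj i
  have hlift : Function.Injective lift :=
    LinearMap.funLeft_injective_of_surjective ℂ ℂ _ Quotient.mk_surjective
  have hmaps : (LinearMap.ker (sum ∘ₗ lift)).map lift ≤
      End.eigenspace (mulVecLin (permMatrixC (n + 1) σ - allOnesC (n + 1))) 1 := by
    rintro _ ⟨g, hg, rfl⟩
    refine mem_eigenspace_one_of_comp_eq_of_sum_eq_zero ?_ ?_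
    · ext a
      exact congrArg g (σ.orbitRel_mk_apply a)
    · simpa [sum, lift] using hg
  calc Nat.card Q - 1 = finrank ℂ (Q → ℂ) - 1 := by
        rw [finrank_fintype_fun_eq_card, Nat.card_eq_fintype_card]
    _ ≤ finrank ℂ (LinearMap.ker (sum ∘ₗ lift)) := (sum ∘ₗ lift).finrank_sub_one_le_finrank_ker
    _ = finrank ℂ ((LinearMap.ker (sum ∘ₗ lift)).map lift) :=
        (Submodule.equivMapOfInjective lift hlift _).finrank_eq
    _ ≤ _ := Submodule.finrank_mono hmaps
end

section
/- Let k ≥ 1 be a natural number and let σ be a derangement of Fin (k+1) (a permutation with no fixed points). Let L = k·I + M_σ − J be the (k+1)×(k+1) matrix over ℚ, where M_σ is the permutation matrix of σ and J is the all-ones matrix. Then the determinant of the k×k matrix obtained from L by deleting its first row and first column equals (1/(k+1)²) · ∏_{ℓ ∈ cycleType(σ)} (k^ℓ + (−1)^{ℓ+1}), where the product runs over the multiset of cycle lengths of σ. -/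
/-!
Let `J` be the all-ones matrix and `L₀₀` the minor of `L` without its first row and column.
If `L` has size `n` and zero row and column sums, then `det (L + J) = n² · det L₀₀`: adding all
columns of `L + J` to the first makes that column constant `n`; clearing it by row operations
leaves `n` times the determinant of `L₀₀` minus copies of `L`'s first row, which by the zero
column sums is `(1 + J) L₀₀`; and `det (1 + J) = n`. Here `L + J = k • 1 + M_σ`.
In the Leibniz expansion of `det (k • 1 + M_σ)` only permutations `τ` with `τ x ∈ {x, σ x}`
survive (two distinct options, as `σ` has no fixed points); these are the products of the
subsets `T` of the cycles of `σ`, and such a `τ` contributes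
`sign τ · k ^ #(fixed points of τ) = ∏_{c ∈ T} (-1)^(ℓ_c + 1) · ∏_{c ∉ T} k^ℓ_c`.
Summing over `T` gives `∏_c (k^ℓ_c + (-1)^(ℓ_c + 1))`.
-/

open Matrix Finset

namespace Matrix

variable {R : Type*} [CommRing R] {n : ℕ}

theorem det_eq_mul_det_sub_row_zero_of_row_sum_eq (A : Matrix (Fin (n + 1)) (Fin (n + 1)) R)
    {m : R} (h : ∀ i, ∑ j, A i j = m) :
    A.det = m * (of fun i j : Fin n => A i.succ j.succ - A 0 j.succ).det := by
  set A' := A.updateCol 0 fun _ => m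
  have hA' : A'.det = A.det := by
    simpa [h] using det_updateCol_sum A 0 fun _ => 1
  set B : Matrix (Fin (n + 1)) (Fin (n + 1)) R :=
    of fun i j => A' i j - (if i = 0 then 0 else 1) * A' 0 j
  have hB : A'.det = B.det :=
    det_eq_of_forall_row_eq_smul_add_const (fun i => if i = 0 then 0 else 1) 0 (by simp)
      fun i j => by simp [B]
  rw [← hA', hB, det_succ_column_zero, Fin.sum_univ_succ]
  simp [B, A', Fin.succ_ne_zero]
  rfl

theorem det_add_all_ones_eq_sq_mul_det_submatrix_succ (L : Matrix (Fin (n + 1)) (Fin (n + 1)) R)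
    (hrow : ∀ i, ∑ j, L i j = 0) (hcol : ∀ j, ∑ i, L i j = 0) :
    (L + of fun _ _ => 1).det = (n + 1) ^ 2 * (L.submatrix Fin.succ Fin.succ).det := by
  set A : Matrix (Fin (n + 1)) (Fin (n + 1)) R := L + of fun _ _ => 1
  have hrowA : ∀ i, ∑ j, A i j = n + 1 := by
    simp [A, sum_add_distrib, hrow]
  have hminor : (of fun i j : Fin n => A i.succ j.succ - A 0 j.succ) =
      (1 + replicateCol Unit (1 : Fin n → R) * replicateRow Unit (1 : Fin n → R)) *
        L.submatrix Fin.succ Fin.succ := by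
    ext i j
    have hcol_succ := hcol j.succ
    rw [Fin.sum_univ_succ] at hcol_succ
    simp [A, add_mul, mul_apply, one_apply, sum_add_distrib]
    linear_combination -hcol_succ
  rw [det_eq_mul_det_sub_row_zero_of_row_sum_eq A hrowA, hminor, det_mul,
    det_one_add_replicateCol_mul_replicateRow]
  simp
  ring

end Matrix

namespace Equiv.Perm

variable {α : Type*} [Fintype α] [DecidableEq α]

theorem cycleFactorsFinset_subset_iff {σ τ : Perm α} :
    τ.cycleFactorsFinset ⊆ σ.cycleFactorsFinset ↔ ∀ x, τ x = x ∨ τ x = σ x := by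
  constructor
  · intro h x
    by_cases hx : x ∈ τ.support
    · obtain ⟨c, hc, hxc⟩ := mem_support_iff_mem_support_of_mem_cycleFactorsFinset.1 hx
      right
      rw [← (mem_cycleFactorsFinset_iff.1 hc).2 x hxc,
        (mem_cycleFactorsFinset_iff.1 (h hc)).2 x hxc]
    · exact Or.inl (notMem_support.1 hx)
  · intro h c hc
    obtain ⟨hcycle, hcτ⟩ := mem_cycleFactorsFinset_iff.1 hc
    refine mem_cycleFactorsFinset_iff.2 ⟨hcycle, fun x hx => ?_⟩
    rw [hcτ x hx]
    exact (h x).resolve_left (hcτ x hx ▸ mem_support.1 hx)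

theorem exists_cycleFactorsFinset_eq_of_subset {σ : Perm α} {T : Finset (Perm α)}
    (hT : T ⊆ σ.cycleFactorsFinset) : ∃ τ : Perm α, τ.cycleFactorsFinset = T :=
  ⟨_, cycleFactorsFinset_eq_finset.2 ⟨fun _ hc => (mem_cycleFactorsFinset_iff.1 (hT hc)).1,
    σ.cycleFactorsFinset_pairwise_disjoint.mono (coe_subset.2 hT), rfl⟩⟩

theorem card_support_eq_sum_cycleFactorsFinset (σ : Perm α) :
    #σ.support = ∑ c ∈ σ.cycleFactorsFinset, #c.support := by
  rw [← sum_cycleType, cycleType_def]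
  rfl

theorem sign_eq_prod_cycleFactorsFinset {R : Type*} [CommRing R] (σ : Perm α) :
    ((sign σ : ℤ) : R) = ∏ c ∈ σ.cycleFactorsFinset, (-1) ^ (#c.support + 1) := by
  rw [sign_of_cycleType', cycleType_def, Multiset.map_map]
  simp [pow_succ]

theorem card_fixed_eq_sum_card_support_sdiff {σ τ : Perm α} (hσ : ∀ x, σ x ≠ x)
    (h : τ.cycleFactorsFinset ⊆ σ.cycleFactorsFinset) :
    #{x | τ x = x} = ∑ c ∈ σ.cycleFactorsFinset \ τ.cycleFactorsFinset, #c.support := by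
  have hfix : #{x | τ x = x} + #τ.support = #σ.support := by
    rw [show σ.support = univ from eq_univ_of_forall fun x => mem_support.2 (hσ x)]
    exact card_filter_add_card_filter_not _
  have hsum := sum_sdiff h (f := fun c => #c.support)
  rw [← card_support_eq_sum_cycleFactorsFinset, ← card_support_eq_sum_cycleFactorsFinset] at hsum
  omega

end Equiv.Perm

namespace Matrix

open Equiv Equiv.Perm

variable {α : Type*} [DecidableEq α]

theorem smul_one_add_permMatrix_apply_of_ne {R : Type*} [NonAssocSemiring R] (a : R) {σ : Perm α} (hσ : ∀ x, σ x ≠ x) (x y : α) :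
    (a • 1 + σ.permMatrix R) x y = if y = x then a else if y = σ x then 1 else 0 := by
  by_cases hyx : y = x
  · subst hyx
    simp [PEquiv.toMatrix_apply, hσ y]
  · simp [PEquiv.toMatrix_apply, Ne.symm hyx, hyx, eq_comm]

variable [Fintype α]

theorem prod_smul_one_add_permMatrix_apply {R : Type*} [CommSemiring R] (a : R) {σ : Perm α} (hσ : ∀ x, σ x ≠ x)
    (τ : Perm α) :
    ∏ x, (a • 1 + σ.permMatrix R) x (τ x) =
      if τ.cycleFactorsFinset ⊆ σ.cycleFactorsFinset then a ^ #{x | τ x = x} else 0 := by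
  simp_rw [smul_one_add_permMatrix_apply_of_ne a hσ, cycleFactorsFinset_subset_iff]
  split_ifs with h
  · calc ∏ x, (if τ x = x then a else if τ x = σ x then 1 else 0)
        = ∏ x, if τ x = x then a else 1 :=
          prod_congr rfl fun x _ => by rcases h x with hx | hx <;> simp [hx]
      _ = a ^ #{x | τ x = x} := by simp [prod_ite]
  · push Not at h
    obtain ⟨x, hx, hσx⟩ := h
    exact prod_eq_zero (mem_univ x) (by simp [hx, hσx])

theorem det_smul_one_add_permMatrix {R : Type*} [CommRing R] (a : R) {σ : Perm α} (hσ : ∀ x, σ x ≠ x) :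
    det (a • 1 + σ.permMatrix R) = (σ.cycleType.map fun ℓ => a ^ ℓ + (-1) ^ (ℓ + 1)).prod := by
  calc det (a • 1 + σ.permMatrix R)
      = ∑ τ : Perm α, ((sign τ : ℤ) : R) * ∏ x, (a • 1 + σ.permMatrix R) x (τ x) := by
        rw [← det_transpose, det_apply']
        rfl
    _ = ∑ τ with τ.cycleFactorsFinset ⊆ σ.cycleFactorsFinset,
          ((sign τ : ℤ) : R) * a ^ #{x | τ x = x} := by
        simp_rw [prod_smul_one_add_permMatrix_apply a hσ, sum_filter, mul_ite, mul_zero]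
    _ = ∑ T ∈ σ.cycleFactorsFinset.powerset,
          (∏ c ∈ T, (-1) ^ (#c.support + 1)) * ∏ c ∈ σ.cycleFactorsFinset \ T, a ^ #c.support := by
        refine sum_bij (fun τ _ => τ.cycleFactorsFinset)
          (fun τ hτ => mem_powerset.2 (mem_filter.1 hτ).2)
          (fun τ _ τ' _ h => cycleFactorsFinset_injective h) (fun T hT => ?_) (fun τ hτ => ?_)
        · obtain ⟨τ, rfl⟩ := exists_cycleFactorsFinset_eq_of_subset (mem_powerset.1 hT)
          exact ⟨τ, mem_filter.2 ⟨mem_univ _, mem_powerset.1 hT⟩, rfl⟩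
        · rw [sign_eq_prod_cycleFactorsFinset,
            card_fixed_eq_sum_card_support_sdiff hσ (mem_filter.1 hτ).2, ← prod_pow_eq_pow_sum]
    _ = ∏ c ∈ σ.cycleFactorsFinset, ((-1) ^ (#c.support + 1) + a ^ #c.support) :=
        (prod_add _ _ _).symm
    _ = (σ.cycleType.map fun ℓ => a ^ ℓ + (-1) ^ (ℓ + 1)).prod := by
        rw [cycleType_def, Multiset.map_map]
        simp [add_comm]

end Matrix

theorem det_laplacian_minor_general (k : ℕ) (σ : Equiv.Perm (Fin (k + 1)))
    (hσ : ∀ i, σ i ≠ i) :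
    (((k : ℚ) • (1 : Matrix (Fin (k + 1)) (Fin (k + 1)) ℚ) + permMatrixQ (k + 1) σ -
          allOnesQ (k + 1)).submatrix Fin.succ Fin.succ).det =
      (1 / ((k : ℚ) + 1) ^ 2) *
        (σ.cycleType.map fun ℓ => (k : ℚ) ^ ℓ + (-1) ^ (ℓ + 1)).prod := by
  set L := (k : ℚ) • (1 : Matrix (Fin (k + 1)) (Fin (k + 1)) ℚ) + permMatrixQ (k + 1) σ -
    allOnesQ (k + 1)
  have hL : L = ((k : ℚ) • 1 + σ.permMatrix ℚ)ᵀ - of fun _ _ => 1 := by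
    ext i j
    simp [L, permMatrixQ, allOnesQ, PEquiv.toMatrix_apply, one_apply, eq_comm, Equiv.eq_symm_apply]
  have hrow : ∀ i, ∑ j, L i j = 0 := by
    simp [hL, sum_add_distrib, one_apply, PEquiv.toMatrix_apply]
  have hcol : ∀ j, ∑ i, L i j = 0 := by
    simp [hL, sum_add_distrib, one_apply, PEquiv.toMatrix_apply, Equiv.symm_apply_eq]
  have hdet := det_add_all_ones_eq_sq_mul_det_submatrix_succ L hrow hcol
  rw [hL, sub_add_cancel, det_transpose, det_smul_one_add_permMatrix _ hσ, ← hL] at hdet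
  rw [hdet]
  field_simp

/-- Kirchhoff-theorem computation in the proof of Theorem 3.4: for a derangement `σ` of
`Fin (k+1)`, the cofactor of the Laplacian `L = k·I + M_σ − J` obtained by deleting the
first row and column equals `(1/(k+1)²) · ∏_{ℓ ∈ cycleType σ} (k^ℓ + (−1)^{ℓ+1})`. -/
theorem det_laplacian_minor (k : ℕ) (hk : 1 ≤ k) (σ : Equiv.Perm (Fin (k + 1)))
    (hσ : ∀ i, σ i ≠ i) :
    (((k : ℚ) • (1 : Matrix (Fin (k + 1)) (Fin (k + 1)) ℚ) + permMatrixQ (k + 1) σ -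
          allOnesQ (k + 1)).submatrix Fin.succ Fin.succ).det =
      (1 / ((k : ℚ) + 1) ^ 2) *
        (σ.cycleType.map fun ℓ => (k : ℚ) ^ ℓ + (-1) ^ (ℓ + 1)).prod :=
  det_laplacian_minor_general k σ hσ
end

section
/- Let k ≥ 1 be a natural number. Then, as elements of ℚ: ∑_{σ} ∏_{ℓ ∈ cycleType(σ)} (k^ℓ + (−1)^{ℓ+1}) = ∑_{p} [ (k+1)! / ((∏_{i ∈ p} i) · (∏_{j ∈ support(p)} (multiplicity of j in p)!)) ] · ∏_{i ∈ p} (k^i + (−1)^{i+1}), where the left sum runs over all derangements σ of Fin (k+1), and the right sum runs over all partitions p of k+1 into parts each of size at least 2; in each product over p the parts are counted with multiplicity, and the second product in the weight runs over the distinct part sizes j of p. -/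
/-!
Grouping derangements by cycle type turns the left-hand side into a sum over partitions of
`k + 1` with all parts at least `2`, each weighted by the number of permutations of that cycle
type. That number is the size of a conjugacy class of `Perm (Fin (k + 1))`, i.e. `(k + 1)!`
divided by the order of the centralizer, `∏ i · ∏ j (mult j)!`.
-/

open Finset

namespace Equiv.Perm

variable {α : Type*} [Fintype α] [DecidableEq α]

theorem sum_cycleType_eq_card_iff (σ : Perm α) :
    σ.cycleType.sum = Fintype.card α ↔ ∀ x, σ x ≠ x := by
  simp [sum_cycleType, card_eq_iff_eq_univ, eq_univ_iff_forall]

theorem forall_ne_and_partition_eq_iff {σ : Perm α} {p : (Fintype.card α).Partition} :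
    ((∀ x, σ x ≠ x) ∧ σ.partition = p) ↔ σ.cycleType = p.parts := by
  have parts_of_derangement (h : ∀ x, σ x ≠ x) : σ.partition.parts = σ.cycleType := by
    rw [parts_partition, ← sum_cycleType, (sum_cycleType_eq_card_iff σ).2 h, Nat.sub_self,
      Multiset.replicate_zero, add_zero]
  constructor
  · rintro ⟨h, rfl⟩
    exact (parts_of_derangement h).symm
  · intro hσ
    have h : ∀ x, σ x ≠ x := (sum_cycleType_eq_card_iff σ).1 (hσ ▸ p.parts_sum)
    exact ⟨h, Nat.Partition.ext (parts_of_derangement h ▸ hσ)⟩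

theorem sum_derangements_eq_sum_partitions {M : Type*} [AddCommMonoid M]
    [DecidablePred fun σ : Perm α => ∀ x, σ x ≠ x] (g : Multiset ℕ → M) {n : ℕ}
    (hn : Fintype.card α = n) :
    ∑ σ ∈ univ.filter (fun σ : Perm α => ∀ x, σ x ≠ x), g σ.cycleType =
      ∑ p ∈ univ.filter (fun p : n.Partition => ∀ i ∈ p.parts, 2 ≤ i),
        #(univ.filter fun σ : Perm α => σ.cycleType = p.parts) • g p.parts := by
  subst hn
  have maps_to : ∀ σ ∈ univ.filter (fun σ : Perm α => ∀ x, σ x ≠ x),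
      σ.partition ∈ univ.filter (fun p : (Fintype.card α).Partition => ∀ i ∈ p.parts, 2 ≤ i) := by
    intro σ hσ
    have hcycle := forall_ne_and_partition_eq_iff.1 ⟨(mem_filter.1 hσ).2, rfl⟩
    simpa [← hcycle] using fun i => two_le_of_mem_cycleType
  rw [← sum_fiberwise_of_maps_to maps_to]
  refine sum_congr rfl fun p _ => ?_
  have fiber : (univ.filter fun σ : Perm α => ∀ x, σ x ≠ x).filter (·.partition = p) =
      univ.filter fun σ : Perm α => σ.cycleType = p.parts := by
    ext σ
    simpa using forall_ne_and_partition_eq_iff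
  rw [fiber, ← sum_const]
  exact sum_congr rfl fun σ hσ => by rw [(mem_filter.1 hσ).2]

theorem card_cycleType_eq_factorial_div {K : Type*} [Field K] [CharZero K] {m : Multiset ℕ}
    (hsum : m.sum = Fintype.card α) (htwo : ∀ a ∈ m, 2 ≤ a) :
    (#(univ.filter fun σ : Perm α => σ.cycleType = m) : K) =
      (Fintype.card α).factorial / (m.prod * ∏ j ∈ m.toFinset, ((m.count j).factorial : K)) := by
  have hcount := card_of_cycleType_mul_eq α m
  rw [if_pos ⟨hsum.le, htwo⟩, hsum, Nat.sub_self, Nat.factorial_zero, one_mul] at hcount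
  have hprod : (m.prod : K) ≠ 0 :=
    Nat.cast_ne_zero.2 (Multiset.prod_ne_zero fun h0 => by simpa using htwo 0 h0)
  have hfact : ∏ j ∈ m.toFinset, ((m.count j).factorial : K) ≠ 0 :=
    prod_ne_zero_iff.2 fun j _ => Nat.cast_ne_zero.2 (Nat.factorial_ne_zero _)
  rw [eq_div_iff (mul_ne_zero hprod hfact)]
  exact_mod_cast hcount

end Equiv.Perm

theorem derangement_sum_eq_partition_sum_general (k : ℕ) :
    (∑ σ ∈ Finset.univ.filter (fun σ : Equiv.Perm (Fin (k + 1)) => ∀ i, σ i ≠ i),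
        (σ.cycleType.map fun ℓ => (k : ℚ) ^ ℓ + (-1) ^ (ℓ + 1)).prod) =
      ∑ p ∈ Finset.univ.filter (fun p : Nat.Partition (k + 1) => ∀ i ∈ p.parts, 2 ≤ i),
        (((k + 1).factorial : ℚ) /
            ((p.parts.prod : ℚ) *
              ∏ j ∈ p.parts.toFinset, ((p.parts.count j).factorial : ℚ))) *
          (p.parts.map fun i => (k : ℚ) ^ i + (-1) ^ (i + 1)).prod := by
  refine (Equiv.Perm.sum_derangements_eq_sum_partitions
    (fun m => (m.map fun ℓ => (k : ℚ) ^ ℓ + (-1) ^ (ℓ + 1)).prod) (Fintype.card_fin (k + 1))).trans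
    (sum_congr rfl fun p hp => ?_)
  rw [nsmul_eq_mul, Equiv.Perm.card_cycleType_eq_factorial_div (by simpa using p.parts_sum)
    (mem_filter.1 hp).2, Fintype.card_fin]

/-- Corollary 3.6 of the paper: the derangement-indexed sum of Theorem 3.4 equals the
partition-indexed sum, where a derangement with cycle type `p` contributes the weight
`(k+1)! / ((∏_{i ∈ p} i) · ∏_j V_p(j)!)` for each partition `p` of `k+1` into parts
of size at least `2`. -/
theorem derangement_sum_eq_partition_sum (k : ℕ) (hk : 1 ≤ k) :
    (∑ σ ∈ Finset.univ.filter (fun σ : Equiv.Perm (Fin (k + 1)) => ∀ i, σ i ≠ i),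
        (σ.cycleType.map fun ℓ => (k : ℚ) ^ ℓ + (-1) ^ (ℓ + 1)).prod) =
      ∑ p ∈ Finset.univ.filter (fun p : Nat.Partition (k + 1) => ∀ i ∈ p.parts, 2 ≤ i),
        (((k + 1).factorial : ℚ) /
            ((p.parts.prod : ℚ) *
              ∏ j ∈ p.parts.toFinset, ((p.parts.count j).factorial : ℚ))) *
          (p.parts.map fun i => (k : ℚ) ^ i + (-1) ^ (i + 1)).prod :=
  derangement_sum_eq_partition_sum_general k
end

section
/- Define, for each natural number k ≥ 1, S(k) = ∑_{σ} ∏_{ℓ ∈ cycleType(σ)} ((k:ℝ)^ℓ + (−1)^{ℓ+1}), where the sum runs over all derangements σ of Fin (k+1). Then S(k) is asymptotic to (k+1)! · k^{k+1} / e; that is, the sequence S(k) / ((k+1)! · k^{k+1}) tends to 1/e (= exp(−1)) as k → ∞. -/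
/-!
For `x ≥ 1` and `ℓ ≥ 2` we have `1 ≤ x ^ ℓ / x ^ 2`, so each factor `x ^ ℓ ± 1` lies between
`(x (1 - x⁻²)) ^ ℓ` and `(x (1 + x⁻²)) ^ ℓ`. The cycle lengths of a derangement of `Fin (k + 1)`
are `≥ 2` and sum to `k + 1`, so every term of `S(k)` lies between `(k (1 ∓ k⁻²)) ^ (k + 1)`, and
`S(k) / ((k + 1)! k ^ (k + 1))` is squeezed between `D_{k+1} / (k + 1)! · (1 ∓ k⁻²) ^ (k + 1)`.
Both bounds tend to `e⁻¹`: `D_n / n! → e⁻¹`, and `(1 + c / k²) ^ (k + 1) → 1` by Bernoulli's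
inequality below and `1 + a ≤ exp a` above.
-/
open Filter Topology Finset Equiv
open scoped Nat

noncomputable def derangementCycleSum (α : Type*) [Fintype α] [DecidableEq α] (x : ℝ) : ℝ :=
  ∑ σ ∈ univ.filter (fun σ : Perm α => ∀ i, σ i ≠ i),
    (σ.cycleType.map fun ℓ => x ^ ℓ + (-1) ^ (ℓ + 1)).prod

theorem Multiset.prod_map_pow_eq_pow_sum {M : Type*} [CommMonoid M] (a : M) (m : Multiset ℕ) :
    (m.map (a ^ ·)).prod = a ^ m.sum := by
  induction m using Multiset.induction with
  | empty => simp
  | cons ℓ m ih => simp [ih, pow_add]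

theorem pow_add_neg_one_pow_mem_Icc {x : ℝ} (hx : 1 ≤ x) {ℓ : ℕ} (hℓ : 2 ≤ ℓ) :
    x ^ ℓ + (-1) ^ (ℓ + 1) ∈ Set.Icc ((x * (1 - 1 / x ^ 2)) ^ ℓ) ((x * (1 + 1 / x ^ 2)) ^ ℓ) := by
  have hxℓ : 0 < x ^ ℓ := by positivity
  have hε : 1 / x ^ ℓ ≤ 1 / x ^ 2 :=
    one_div_le_one_div_of_le (by positivity) (pow_le_pow_right₀ hx hℓ)
  have hε0 : 0 ≤ 1 / x ^ 2 := by positivity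
  have hε1 : 1 / x ^ 2 ≤ 1 := div_le_one_of_le₀ (one_le_pow₀ hx) (by positivity)
  have hsign : -1 ≤ (-1 : ℝ) ^ (ℓ + 1) ∧ (-1 : ℝ) ^ (ℓ + 1) ≤ 1 := abs_le.mp (by simp)
  rw [mul_pow, mul_pow]
  constructor
  · calc x ^ ℓ * (1 - 1 / x ^ 2) ^ ℓ ≤ x ^ ℓ * (1 - 1 / x ^ 2) := by
          gcongr
          exact pow_le_of_le_one (by linarith) (by linarith) (by omega)
      _ ≤ x ^ ℓ * (1 - 1 / x ^ ℓ) := by gcongr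
      _ ≤ x ^ ℓ + (-1) ^ (ℓ + 1) := by rw [mul_one_sub, mul_one_div_cancel hxℓ.ne']; linarith
  · calc x ^ ℓ + (-1) ^ (ℓ + 1) ≤ x ^ ℓ * (1 + 1 / x ^ ℓ) := by
          rw [mul_one_add, mul_one_div_cancel hxℓ.ne']; linarith
      _ ≤ x ^ ℓ * (1 + 1 / x ^ 2) := by gcongr
      _ ≤ x ^ ℓ * (1 + 1 / x ^ 2) ^ ℓ := by
          gcongr
          exact le_self_pow₀ (by linarith) (by omega)

theorem Multiset.prod_map_pow_add_neg_one_pow_mem_Icc {x : ℝ} (hx : 1 ≤ x) {m : Multiset ℕ}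
    (hm : ∀ ℓ ∈ m, 2 ≤ ℓ) :
    (m.map fun ℓ => x ^ ℓ + (-1) ^ (ℓ + 1)).prod ∈
      Set.Icc ((x * (1 - 1 / x ^ 2)) ^ m.sum) ((x * (1 + 1 / x ^ 2)) ^ m.sum) := by
  have hlow : 0 ≤ x * (1 - 1 / x ^ 2) := by
    have : 1 / x ^ 2 ≤ 1 := div_le_one_of_le₀ (one_le_pow₀ hx) (by positivity)
    nlinarith
  rw [← prod_map_pow_eq_pow_sum, ← prod_map_pow_eq_pow_sum]
  exact ⟨prod_map_le_prod_map₀ _ _ (fun _ _ => by positivity)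
      fun ℓ hℓ => (pow_add_neg_one_pow_mem_Icc hx (hm ℓ hℓ)).1,
    prod_map_le_prod_map₀ _ _
      (fun ℓ hℓ => (pow_nonneg hlow ℓ).trans (pow_add_neg_one_pow_mem_Icc hx (hm ℓ hℓ)).1)
      fun ℓ hℓ => (pow_add_neg_one_pow_mem_Icc hx (hm ℓ hℓ)).2⟩

theorem Equiv.Perm.sum_cycleType_of_mem_derangements {α : Type*} [Fintype α] [DecidableEq α]
    {σ : Perm α} (hσ : σ ∈ derangements α) : σ.cycleType.sum = Fintype.card α := by
  rw [sum_cycleType, eq_univ_iff_forall.mpr fun i => mem_support.mpr (hσ i), card_univ]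

theorem card_filter_derangement_eq_numDerangements (α : Type*) [Fintype α] [DecidableEq α] :
    #(univ.filter (fun σ : Perm α => ∀ i, σ i ≠ i)) = numDerangements (Fintype.card α) := by
  rw [← card_derangements_eq_numDerangements, ← Fintype.card_subtype]
  rfl

theorem derangementCycleSum_mem_Icc (α : Type*) [Fintype α] [DecidableEq α] {x : ℝ}
    (hx : 1 ≤ x) :
    derangementCycleSum α x ∈
      Set.Icc (numDerangements (Fintype.card α) * (x * (1 - 1 / x ^ 2)) ^ Fintype.card α)
        (numDerangements (Fintype.card α) * (x * (1 + 1 / x ^ 2)) ^ Fintype.card α) := by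
  have hbound : ∀ σ ∈ univ.filter (fun σ : Perm α => ∀ i, σ i ≠ i), _ :=
    fun σ hσ => (Equiv.Perm.sum_cycleType_of_mem_derangements (mem_filter.mp hσ).2) ▸
      Multiset.prod_map_pow_add_neg_one_pow_mem_Icc hx fun _ => Equiv.Perm.two_le_of_mem_cycleType
  rw [← card_filter_derangement_eq_numDerangements, ← nsmul_eq_mul, ← nsmul_eq_mul]
  exact ⟨card_nsmul_le_sum _ _ _ fun σ hσ => (hbound σ hσ).1,
    sum_le_card_nsmul _ _ _ fun σ hσ => (hbound σ hσ).2⟩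

theorem derangementCycleSum_div_mem_Icc (α : Type*) [Fintype α] [DecidableEq α] {x : ℝ}
    (hx : 1 ≤ x) :
    derangementCycleSum α x / ((Fintype.card α)! * x ^ Fintype.card α) ∈
      Set.Icc
        (numDerangements (Fintype.card α) / (Fintype.card α)! *
          (1 - 1 / x ^ 2) ^ Fintype.card α)
        (numDerangements (Fintype.card α) / (Fintype.card α)! *
          (1 + 1 / x ^ 2) ^ Fintype.card α) := by
  set n := Fintype.card α
  have hpos : (0 : ℝ) < n ! * x ^ n := by positivity
  have hnormalize (a : ℝ) :
      numDerangements n * (x * a) ^ n / (n ! * x ^ n) = numDerangements n / n ! * a ^ n := by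
    rw [mul_pow]
    field_simp
  obtain ⟨hlow, hupp⟩ := derangementCycleSum_mem_Icc α hx
  rw [← hnormalize, ← hnormalize]
  exact ⟨div_le_div_of_nonneg_right hlow hpos.le, div_le_div_of_nonneg_right hupp hpos.le⟩

theorem tendsto_one_add_pow_of_tendsto_mul {ι : Type*} {l : Filter ι} {a : ι → ℝ} {n : ι → ℕ}
    (ha : ∀ᶠ i in l, -1 ≤ a i) (h : Tendsto (fun i => n i * a i) l (𝓝 0)) :
    Tendsto (fun i => (1 + a i) ^ n i) l (𝓝 1) := by
  have hlow : Tendsto (fun i => 1 + n i * a i) l (𝓝 1) := by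
    simpa using tendsto_const_nhds.add h
  have hupp : Tendsto (fun i => Real.exp (n i * a i)) l (𝓝 1) := by
    simpa [Function.comp_def] using (Real.continuous_exp.tendsto 0).comp h
  refine tendsto_of_tendsto_of_tendsto_of_le_of_le' hlow hupp ?_ ?_ <;>
    filter_upwards [ha] with i hi
  · exact one_add_mul_le_pow (by linarith) _
  · calc (1 + a i) ^ n i ≤ Real.exp (a i) ^ n i := by
          gcongr
          · linarith
          · linarith [Real.add_one_le_exp (a i)]
      _ = Real.exp (n i * a i) := (Real.exp_nat_mul _ _).symm

theorem tendsto_one_add_div_sq_pow (c : ℝ) :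
    Tendsto (fun k : ℕ => (1 + c / k ^ 2) ^ (k + 1)) atTop (𝓝 1) := by
  have hinv : Tendsto (fun k : ℕ => 1 / (k : ℝ)) atTop (𝓝 0) :=
    tendsto_one_div_atTop_nhds_zero_nat
  have hsmall : Tendsto (fun k : ℕ => c / (k : ℝ) ^ 2) atTop (𝓝 0) := by
    simpa [div_eq_mul_inv] using hinv.pow 2 |>.const_mul c
  refine tendsto_one_add_pow_of_tendsto_mul
    (hsmall.eventually_const_le (by norm_num : (-1 : ℝ) < 0)) ?_
  have hprod : Tendsto (fun k : ℕ => c * (1 / (k : ℝ)) * (1 + 1 / (k : ℝ))) atTop (𝓝 0) := by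
    simpa using (hinv.const_mul c).mul (tendsto_const_nhds.add hinv)
  refine hprod.congr' ?_
  filter_upwards [eventually_ne_atTop 0] with k hk
  push_cast
  field_simp

/-- Asymptotics from the proof of Theorem 3.9: the derangement sum
`S(k) = ∑_{σ ∈ 𝔇_{k+1}} ∏_{ℓ ∈ cycleType σ} (k^ℓ + (−1)^{ℓ+1})` satisfies
`S(k) / ((k+1)! · k^{k+1}) → 1/e` as `k → ∞`. -/
theorem derangement_sum_asymptotics :
    Filter.Tendsto
      (fun k : ℕ =>
        (∑ σ ∈ Finset.univ.filter (fun σ : Equiv.Perm (Fin (k + 1)) => ∀ i, σ i ≠ i),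
            (σ.cycleType.map fun ℓ => (k : ℝ) ^ ℓ + (-1) ^ (ℓ + 1)).prod) /
          (((k + 1).factorial : ℝ) * (k : ℝ) ^ (k + 1)))
      Filter.atTop (nhds (Real.exp (-1))) := by
  have hD : Tendsto (fun k : ℕ => (numDerangements (k + 1) : ℝ) / (k + 1)!) atTop
      (𝓝 (Real.exp (-1))) :=
    numDerangements_tendsto_inv_e.comp (tendsto_add_atTop_nat 1)
  have hlow := hD.mul (tendsto_one_add_div_sq_pow (-1))
  have hupp := hD.mul (tendsto_one_add_div_sq_pow 1)
  rw [mul_one] at hlow hupp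
  refine tendsto_of_tendsto_of_tendsto_of_le_of_le' hlow hupp ?_ ?_ <;>
    filter_upwards [eventually_ge_atTop 1] with k hk <;>
    obtain ⟨hle, hge⟩ := derangementCycleSum_div_mem_Icc (Fin (k + 1)) (x := k) (mod_cast hk) <;>
    simp only [derangementCycleSum, Fintype.card_fin, neg_div, ← sub_eq_add_neg] at hle hge ⊢
  -- the goal decides `∀ i, σ i ≠ i` by `Nat.decidableForallFin`, `derangementCycleSum` by
  -- `Fintype.decidableForallFintype`
  exacts [by convert hle using 4, by convert hge using 4]
end
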